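/- If T is a Fishburn tree of size n with maximum label k, then the matrix M(T) = (m_i(j))_{i,j∈[k]}, where m_i(j) is the number of nodes labeled j on the i-th maximal right path W_i, is a k×k Fishburn matrix of size n (lower triangular, nonnegative integer entries, every row and every column containing a nonzero entry, entries summing to n). -/

import Mathlib

inductive LTree where
  | nil : LTree
  | node : LTree → ℕ → LTree → LTree
deriving DecidableEq

namespace LTree

def size : LTree → ℕ
  | nil => 0
  | node L _ R => L.size + 1 + R.size

/-- The in-order sequence of labels. -/
def inorder : LTree → List ℕ
  | nil => []
  | node L r R => L.inorder ++ r :: R.inorder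

/-- The maximum label (0 for the empty tree). -/
def maxL : LTree → ℕ
  | nil => 0
  | node L r R => max r (max L.maxL R.maxL)

/-- Weakly decreasing along every root-to-leaf path. -/
def Decreasing : LTree → Prop
  | nil => True
  | node L r R => L.maxL ≤ r ∧ R.maxL ≤ r ∧ L.Decreasing ∧ R.Decreasing

/-- Strictly decreasing to the left: every label in a left subtree
is strictly smaller than the label of its parent. -/
def StrictLeft : LTree → Prop
  | nil => True
  | node L r R => L.maxL < r ∧ L.StrictLeft ∧ R.StrictLeft

/-- An endotree: decreasing, strictly decreasing to the left, labels in `[n]`. -/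
def IsEndotree (T : LTree) : Prop :=
  T.Decreasing ∧ T.StrictLeft ∧ ∀ l ∈ T.inorder, 1 ≤ l ∧ l ≤ T.size

/-- A regular endotree: the set of labels equals `[k]` for some `k ≤ n`. -/
def IsRegularEndotree (T : LTree) : Prop :=
  T.IsEndotree ∧ ∃ k ≤ T.size, ∀ l, l ∈ T.inorder ↔ (1 ≤ l ∧ l ≤ k)

end LTree

/-- An endofunction on `[n]`, identified with a word of length `n` over `[n]`. -/
def IsEndofun (x : List ℕ) : Prop := ∀ a ∈ x, 1 ≤ a ∧ a ≤ x.length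

/-- A Cayley permutation: an endofunction whose image is `[k]` for some `k ≤ n`. -/
def IsCayley (x : List ℕ) : Prop :=
  IsEndofun x ∧ ∃ k ≤ x.length, ∀ j, j ∈ x ↔ (1 ≤ j ∧ j ≤ k)

namespace LTree

/-- The list of (subtrees rooted at the) nodes of `T`, in in-order. -/
def nodes : LTree → List LTree
  | nil => []
  | node L r R => L.nodes ++ node L r R :: R.nodes

/-- Root label (0 for the empty tree). -/
def rootLabel : LTree → ℕ
  | nil => 0
  | node _ r _ => r

/-- Left subtree. -/
def leftT : LTree → LTree
  | nil => nil
  | node L _ _ => L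

/-- Indices `i` (0-based) such that the `i`-th in-order node `v_{i+1}` is in
`treetops(T)`: either the first node or a node with nonempty left subtree. -/
def treetopsIdx (T : LTree) : Set ℕ :=
  {i | i < T.size ∧ (i = 0 ∨ (T.nodes.getD i nil).leftT ≠ nil)}

/-- Indices `i` such that the label of the `i`-th in-order node does not occur
at any earlier in-order node. -/
def unseenIdx (T : LTree) : Set ℕ :=
  {i | i < T.size ∧
    ∀ j < i, (T.nodes.getD j nil).rootLabel ≠ (T.nodes.getD i nil).rootLabel}

/-- A Fishburn tree: a regular endotree with `treetops(T) = unseen(T)`. -/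
def IsFishburnTree (T : LTree) : Prop :=
  T.IsRegularEndotree ∧ treetopsIdx T = unseenIdx T

end LTree

namespace LTree

/-- The subtree at a position (path from the root: `false` = left, `true` = right). -/
def subtreeAt : LTree → List Bool → Option LTree
  | t, [] => some t
  | nil, _ :: _ => none
  | node L _ _, false :: q => L.subtreeAt q
  | node _ _ R, true :: q => R.subtreeAt q

/-- `p` is the position of a node of `T`. -/
def IsNodePos (T : LTree) (p : List Bool) : Prop :=
  ∃ L r R, T.subtreeAt p = some (node L r R)

/-- The label of the node at position `p` (0 if there is no node there). -/
def labelAt (T : LTree) (p : List Bool) : ℕ :=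
  match T.subtreeAt p with
  | some t => t.rootLabel
  | none => 0

/-- `p` lies on the diagonal of `T`, i.e. on the maximal left path from the root. -/
def OnDiag (p : List Bool) : Prop := ∀ b ∈ p, b = false

/-- The node at position `p` is a treetop: the first in-order node (the deepest
node of the diagonal) or a node with a left child. -/
def PosTreetop (T : LTree) (p : List Bool) : Prop :=
  IsNodePos T p ∧ (IsNodePos T (p ++ [false]) ∨ OnDiag p)

/-- Auxiliary computation of the index of the maximal right path through a node:
the state records whether the current node is on the diagonal and the current
path index. -/
def blabelAux : LTree → Bool → ℕ → List Bool → ℕ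
  | _, _, cur, [] => cur
  | nil, _, _, _ :: _ => 0
  | node _ _ R, _, cur, true :: q => blabelAux R false cur q
  | node L r _, d, _, false :: q =>
      blabelAux L d (if d then L.rootLabel else r) q

/-- The index `b(u)` of the maximal right path containing the node at `p`:
`b(root) = ℓ(root)`; `b(right child of u) = b(u)`; `b(left child of u)` is
`ℓ(left child)` if `u` is diagonal and `ℓ(u)` otherwise. -/
def blabel (T : LTree) (p : List Bool) : ℕ :=
  blabelAux T true T.rootLabel p

/-- The list of positions of the nodes of `T`. -/
def positions : LTree → List (List Bool)
  | nil => []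
  | node L _ R =>
      [] :: (L.positions.map (List.cons false) ++ R.positions.map (List.cons true))

end LTree

/-- A Fishburn matrix: lower triangular with nonnegative integer entries, and
every row and every column contains a nonzero entry. -/
def IsFishburnMatrix {k : ℕ} (A : Matrix (Fin k) (Fin k) ℕ) : Prop :=
  (∀ i j : Fin k, i < j → A i j = 0) ∧
  (∀ i : Fin k, ∃ j : Fin k, A i j ≠ 0) ∧
  (∀ j : Fin k, ∃ i : Fin k, A i j ≠ 0)

/-- The size of a matrix: the sum of its entries. -/
def matSize {k : ℕ} (A : Matrix (Fin k) (Fin k) ℕ) : ℕ := ∑ i, ∑ j, A i j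

/-- The matrix of a Fishburn tree: the `(i,j)` entry (1-indexed) is the number
of nodes with label `j` on the `i`-th maximal right path `W_i`. -/
def LTree.treeMatrix (T : LTree) : Matrix (Fin T.maxL) (Fin T.maxL) ℕ :=
  fun i j =>
    ((T.positions.filter fun p =>
        T.blabel p = i.1 + 1 ∧ T.labelAt p = j.1 + 1)).length


namespace LTree

lemma length_positions : ∀ T : LTree, T.positions.length = T.size
  | nil => rfl
  | node L r R => by
    simp [positions, size, length_positions L, length_positions R]; omega

lemma mem_positions_iff : ∀ (T : LTree) (p : List Bool),
    p ∈ T.positions ↔ T.IsNodePos p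
  | nil, p => by
    simp only [positions, List.not_mem_nil, false_iff, IsNodePos]
    rintro ⟨L, r, R, hp⟩
    cases p with
    | nil => simp [subtreeAt] at hp
    | cons b q => cases b <;> simp [subtreeAt] at hp
  | node L r R, p => by
    cases p with
    | nil => simp [positions, IsNodePos, subtreeAt]
    | cons b q =>
      cases b <;>
        simp [positions, IsNodePos, subtreeAt, mem_positions_iff L q,
          mem_positions_iff R q, List.mem_map]

lemma labelAt_mem_inorder : ∀ (T : LTree) (p : List Bool),
    T.IsNodePos p → T.labelAt p ∈ T.inorder
  | nil, p, hp => by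
    exfalso; obtain ⟨L', r', R', hp⟩ := hp
    cases p with
    | nil => simp [subtreeAt] at hp
    | cons b q => cases b <;> simp [subtreeAt] at hp
  | node L r R, [], _ => by simp [labelAt, subtreeAt, rootLabel, inorder]
  | node L r R, false :: q, hp => by
    have : L.IsNodePos q := by
      obtain ⟨L', r', R', hp⟩ := hp; exact ⟨L', r', R', hp⟩
    have := labelAt_mem_inorder L q this
    simp only [labelAt, subtreeAt] at *
    simp [inorder, this]
  | node L r R, true :: q, hp => by
    have : R.IsNodePos q := by
      obtain ⟨L', r', R', hp⟩ := hp; exact ⟨L', r', R', hp⟩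
    have := labelAt_mem_inorder R q this
    simp only [labelAt, subtreeAt] at *
    simp [inorder, this]

lemma exists_pos_of_mem_inorder : ∀ (T : LTree) (l : ℕ),
    l ∈ T.inorder → ∃ p, T.IsNodePos p ∧ T.labelAt p = l
  | nil, l, hl => by simp [inorder] at hl
  | node L r R, l, hl => by
    simp only [inorder, List.mem_append, List.mem_cons] at hl
    rcases hl with hl | hl | hl
    · obtain ⟨p, hp, hlab⟩ := exists_pos_of_mem_inorder L l hl
      obtain ⟨L', r', R', hp'⟩ := hp
      exact ⟨false :: p, ⟨L', r', R', by simpa [subtreeAt] using hp'⟩,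
        by simpa [labelAt, subtreeAt] using hlab⟩
    · exact ⟨[], ⟨L, r, R, rfl⟩, by simp [labelAt, subtreeAt, rootLabel, hl]⟩
    · obtain ⟨p, hp, hlab⟩ := exists_pos_of_mem_inorder R l hl
      obtain ⟨L', r', R', hp'⟩ := hp
      exact ⟨true :: p, ⟨L', r', R', by simpa [subtreeAt] using hp'⟩,
        by simpa [labelAt, subtreeAt] using hlab⟩

lemma rootLabel_le_maxL : ∀ T : LTree, T.rootLabel ≤ T.maxL
  | nil => le_refl 0
  | node L r R => by simp [rootLabel, maxL]

lemma le_maxL_of_mem_inorder : ∀ (T : LTree) (l : ℕ), l ∈ T.inorder → l ≤ T.maxL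
  | nil, l, hl => by simp [inorder] at hl
  | node L r R, l, hl => by
    simp only [inorder, List.mem_append, List.mem_cons] at hl
    simp only [maxL]
    rcases hl with hl | hl | hl
    · exact le_max_of_le_right (le_max_of_le_left (le_maxL_of_mem_inorder L l hl))
    · omega
    · exact le_max_of_le_right (le_max_of_le_right (le_maxL_of_mem_inorder R l hl))

lemma maxL_mem_inorder : ∀ T : LTree, T ≠ nil → T.maxL ∈ T.inorder
  | nil, h => absurd rfl h
  | node L r R, _ => by
    have hin : ∀ x : ℕ, x = r ∨ x ∈ L.inorder ∨ x ∈ R.inorder →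
        x ∈ (node L r R).inorder := by
      intro x hx
      simp only [inorder, List.mem_append, List.mem_cons]
      tauto
    by_cases hr : max L.maxL R.maxL ≤ r
    · exact hin _ (Or.inl (by simp only [maxL]; omega))
    push_neg at hr
    by_cases hLR : L.maxL ≤ R.maxL
    · have hR : R ≠ nil := by
        rintro rfl; simp only [maxL] at hLR hr; omega
      refine hin _ (Or.inr (Or.inr ?_))
      have hmax : (node L r R).maxL = R.maxL := by simp only [maxL]; omega
      rw [hmax]; exact maxL_mem_inorder R hR
    · push_neg at hLR
      have hL : L ≠ nil := by
        rintro rfl; simp only [maxL] at hLR; omega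
      refine hin _ (Or.inr (Or.inl ?_))
      have hmax : (node L r R).maxL = L.maxL := by simp only [maxL]; omega
      rw [hmax]; exact maxL_mem_inorder L hL

lemma nodes_length : ∀ T : LTree, T.nodes.length = T.size
  | nil => rfl
  | node L r R => by simp [nodes, size, nodes_length L, nodes_length R]; omega

lemma inorder_eq_map : ∀ T : LTree, T.inorder = T.nodes.map rootLabel
  | nil => rfl
  | node L r R => by
    simp [inorder, nodes, inorder_eq_map L, inorder_eq_map R, rootLabel]

lemma mem_nodes_pos : ∀ (T t : LTree), t ∈ T.nodes →
    ∃ p, T.IsNodePos p ∧ T.subtreeAt p = some t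
  | nil, t, ht => by simp [nodes] at ht
  | node L r R, t, ht => by
    simp only [nodes, List.mem_append, List.mem_cons] at ht
    rcases ht with ht | ht | ht
    · obtain ⟨p, hp, hsub⟩ := mem_nodes_pos L t ht
      obtain ⟨L', r', R', hp'⟩ := hp
      exact ⟨false :: p, ⟨L', r', R', by simpa [subtreeAt] using hp'⟩,
        by simpa [subtreeAt] using hsub⟩
    · exact ⟨[], ⟨L, r, R, rfl⟩, by rw [ht]; rfl⟩
    · obtain ⟨p, hp, hsub⟩ := mem_nodes_pos R t ht
      obtain ⟨L', r', R', hp'⟩ := hp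
      exact ⟨true :: p, ⟨L', r', R', by simpa [subtreeAt] using hp'⟩,
        by simpa [subtreeAt] using hsub⟩

lemma head_nodes_diag : ∀ T : LTree, T ≠ nil →
    ∃ p, OnDiag p ∧ T.IsNodePos p ∧ T.subtreeAt p = some (T.nodes.getD 0 nil)
  | nil, h => absurd rfl h
  | node L r R, _ => by
    rcases eq_or_ne L nil with rfl | hL
    · refine ⟨[], ?_, ⟨nil, r, R, rfl⟩, ?_⟩
      · intro b hb; simp at hb
      · simp [nodes, subtreeAt]
    · obtain ⟨p, hdiag, hpos, hsub⟩ := head_nodes_diag L hL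
      obtain ⟨L', r', R', hp'⟩ := hpos
      refine ⟨false :: p, ?_, ⟨L', r', R', by simpa [subtreeAt] using hp'⟩, ?_⟩
      · intro b hb
        rcases List.mem_cons.mp hb with rfl | hb
        · rfl
        · exact hdiag b hb
      · have hLnodes : L.nodes ≠ [] := by
          intro hnil
          have := nodes_length L
          rw [hnil] at this
          cases L with
          | nil => exact hL rfl
          | node a b c => simp [size] at this; omega
        simp only [nodes, subtreeAt]
        rw [hsub]
        congr 1
        cases hn : L.nodes with
        | nil => exact absurd hn hLnodes
        | cons x xs => simp [hn]

lemma blabelAux_bounds : ∀ (q : List Bool) (t : LTree) (d : Bool) (cur : ℕ),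
    t.Decreasing → t.rootLabel ≤ cur → t.IsNodePos q →
    t.labelAt q ≤ blabelAux t d cur q ∧ blabelAux t d cur q ≤ max cur t.maxL
  | [], t, d, cur, hdec, hcur, hpos => by
    obtain ⟨L, r, R, hp⟩ := hpos
    have ht : t = node L r R := by simpa [subtreeAt] using hp
    subst ht
    simp only [labelAt, subtreeAt, rootLabel, blabelAux]
    exact ⟨hcur, le_max_left _ _⟩
  | b :: q, nil, d, cur, hdec, hcur, hpos => by
    exfalso; obtain ⟨L, r, R, hp⟩ := hpos
    cases b <;> simp [subtreeAt] at hp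
  | false :: q, node L r R, d, cur, hdec, hcur, hpos => by
    obtain ⟨hLr, hRr, hLdec, hRdec⟩ := hdec
    have hpos' : L.IsNodePos q := by
      obtain ⟨L', r', R', hp⟩ := hpos; exact ⟨L', r', R', hp⟩
    have hcur' : L.rootLabel ≤ (if d then L.rootLabel else r) := by
      split
      · exact le_refl _
      · exact le_trans (rootLabel_le_maxL L) hLr
    obtain ⟨h1, h2⟩ := blabelAux_bounds q L d _ hLdec hcur' hpos'
    constructor
    · simpa [labelAt, subtreeAt, blabelAux] using h1
    · simp only [blabelAux]
      refine le_trans h2 ?_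
      have h3 : (if d then L.rootLabel else r) ≤ max r (max L.maxL R.maxL) := by
        split
        · exact le_max_of_le_right (le_max_of_le_left (rootLabel_le_maxL L))
        · exact le_max_left _ _
      simp only [maxL]
      omega
  | true :: q, node L r R, d, cur, hdec, hcur, hpos => by
    obtain ⟨hLr, hRr, hLdec, hRdec⟩ := hdec
    have hpos' : R.IsNodePos q := by
      obtain ⟨L', r', R', hp⟩ := hpos; exact ⟨L', r', R', hp⟩
    have hcur' : R.rootLabel ≤ cur :=
      le_trans (rootLabel_le_maxL R) (le_trans hRr hcur)
    obtain ⟨h1, h2⟩ := blabelAux_bounds q R false cur hRdec hcur' hpos'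
    constructor
    · simpa [labelAt, subtreeAt, blabelAux] using h1
    · simp only [blabelAux]
      refine le_trans h2 ?_
      simp only [maxL]
      omega

lemma blabelAux_append_false : ∀ (q : List Bool) (t : LTree) (cur : ℕ),
    t.IsNodePos q →
    blabelAux t false cur (q ++ [false]) = t.labelAt q
  | [], t, cur, hpos => by
    obtain ⟨L, r, R, hp⟩ := hpos
    have ht : t = node L r R := by simpa [subtreeAt] using hp
    subst ht
    simp [blabelAux, labelAt, subtreeAt, rootLabel]
  | b :: q, nil, cur, hpos => by
    exfalso; obtain ⟨L, r, R, hp⟩ := hpos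
    cases b <;> simp [subtreeAt] at hp
  | false :: q, node L r R, cur, hpos => by
    have hpos' : L.IsNodePos q := by
      obtain ⟨L', r', R', hp⟩ := hpos; exact ⟨L', r', R', hp⟩
    have := blabelAux_append_false q L r hpos'
    simpa [blabelAux, labelAt, subtreeAt] using this
  | true :: q, node L r R, cur, hpos => by
    have hpos' : R.IsNodePos q := by
      obtain ⟨L', r', R', hp⟩ := hpos; exact ⟨L', r', R', hp⟩
    have := blabelAux_append_false q R cur hpos'
    simpa [blabelAux, labelAt, subtreeAt] using this

lemma blabelAux_append_true_flag : ∀ (q : List Bool) (t : LTree) (cur : ℕ),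
    t.IsNodePos q → ¬ OnDiag q →
    blabelAux t true cur (q ++ [false]) = t.labelAt q
  | [], t, cur, hpos, hdiag => by
    exact absurd (fun b hb => by simp at hb) hdiag
  | b :: q, nil, cur, hpos, hdiag => by
    exfalso; obtain ⟨L, r, R, hp⟩ := hpos
    cases b <;> simp [subtreeAt] at hp
  | false :: q, node L r R, cur, hpos, hdiag => by
    have hpos' : L.IsNodePos q := by
      obtain ⟨L', r', R', hp⟩ := hpos; exact ⟨L', r', R', hp⟩
    have hdiag' : ¬ OnDiag q := by
      intro hd; exact hdiag (fun b hb => by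
        rcases List.mem_cons.mp hb with rfl | hb
        · rfl
        · exact hd b hb)
    have := blabelAux_append_true_flag q L L.rootLabel hpos' hdiag'
    simpa [blabelAux, labelAt, subtreeAt] using this
  | true :: q, node L r R, cur, hpos, hdiag => by
    have hpos' : R.IsNodePos q := by
      obtain ⟨L', r', R', hp⟩ := hpos; exact ⟨L', r', R', hp⟩
    have := blabelAux_append_false q R cur hpos'
    simpa [blabelAux, labelAt, subtreeAt] using this

lemma blabelAux_diag : ∀ (q : List Bool) (t : LTree),
    t.IsNodePos q → OnDiag q →
    blabelAux t true t.rootLabel q = t.labelAt q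
  | [], t, hpos, _ => by simp [blabelAux, labelAt, subtreeAt]
  | b :: q, nil, hpos, _ => by
    exfalso; obtain ⟨L, r, R, hp⟩ := hpos
    cases b <;> simp [subtreeAt] at hp
  | true :: q, node L r R, hpos, hdiag => by
    exact absurd (hdiag true (List.mem_cons_self)) (by simp)
  | false :: q, node L r R, hpos, hdiag => by
    have hpos' : L.IsNodePos q := by
      obtain ⟨L', r', R', hp⟩ := hpos; exact ⟨L', r', R', hp⟩
    have hdiag' : OnDiag q := fun b hb => hdiag b (List.mem_cons_of_mem _ hb)
    have := blabelAux_diag q L hpos' hdiag'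
    simpa [blabelAux, labelAt, subtreeAt] using this

lemma blabel_diag (T : LTree) (p : List Bool) (hpos : T.IsNodePos p)
    (hdiag : OnDiag p) : T.blabel p = T.labelAt p :=
  blabelAux_diag p T hpos hdiag

lemma blabel_append (T : LTree) (p : List Bool) (hpos : T.IsNodePos p)
    (hdiag : ¬ OnDiag p) : T.blabel (p ++ [false]) = T.labelAt p :=
  blabelAux_append_true_flag p T T.rootLabel hpos hdiag

lemma blabel_bounds (T : LTree) (p : List Bool) (hdec : T.Decreasing)
    (hpos : T.IsNodePos p) :
    T.labelAt p ≤ T.blabel p ∧ T.blabel p ≤ T.maxL := by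
  obtain ⟨h1, h2⟩ := blabelAux_bounds p T true T.rootLabel hdec (le_refl _) hpos
  exact ⟨h1, le_trans h2 (by simpa using rootLabel_le_maxL T)⟩

lemma subtreeAt_append : ∀ (p : List Bool) (T : LTree) (q : List Bool),
    T.subtreeAt (p ++ q) = (T.subtreeAt p).bind (·.subtreeAt q)
  | [], T, q => by simp [subtreeAt]
  | b :: p, nil, q => by cases b <;> simp [subtreeAt]
  | false :: p, node L r R, q => by simp [subtreeAt, subtreeAt_append p L q]
  | true :: p, node L r R, q => by simp [subtreeAt, subtreeAt_append p R q]

end LTree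

lemma sum_filter_length {α β : Type*} (s : Finset β)
    (P : β → α → Prop) [∀ b a, Decidable (P b a)] (l : List α)
    (h : ∀ a ∈ l, ∃! b, b ∈ s ∧ P b a) :
    ∑ b ∈ s, (l.filter fun a => P b a).length = l.length := by
  induction l with
  | nil => simp
  | cons a l ih =>
    have h' : ∀ x ∈ l, ∃! b, b ∈ s ∧ P b x := fun x hx => h x (List.mem_cons_of_mem _ hx)
    have key : ∑ b ∈ s, ((a :: l).filter fun x => P b x).length
        = (∑ b ∈ s, if P b a then 1 else 0) + ∑ b ∈ s, (l.filter fun x => P b x).length := by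
      rw [← Finset.sum_add_distrib]
      refine Finset.sum_congr rfl fun b _ => ?_
      by_cases hP : P b a
      · simp [List.filter_cons, hP]; omega
      · simp [List.filter_cons, hP]
    rw [key, ih h']
    have : (∑ b ∈ s, if P b a then 1 else 0) = 1 := by
      obtain ⟨b₀, ⟨hb₀s, hb₀P⟩, huniq⟩ := h a (List.mem_cons_self)
      rw [Finset.sum_boole]
      norm_cast
      rw [Finset.card_eq_one]
      exact ⟨b₀, Finset.eq_singleton_iff_unique_mem.mpr
        ⟨Finset.mem_filter.mpr ⟨hb₀s, hb₀P⟩,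
         fun x hx => huniq x ⟨(Finset.mem_filter.mp hx).1, (Finset.mem_filter.mp hx).2⟩⟩⟩
    rw [this]
    simp [List.length_cons]; omega


/-- if `T` is a Fishburn tree of size `n` with maximum label `k`,
then `M(T)` is a `k × k` Fishburn matrix of size `n`. -/
theorem treeMatrix_isFishburn (T : LTree) (h : T.IsFishburnTree) :
    IsFishburnMatrix T.treeMatrix ∧ matSize T.treeMatrix = T.size := by
  classical
  obtain ⟨⟨⟨hdec, hsl, hsize⟩, k', hk'size, hk'⟩, htt⟩ := h
  by_cases hnil : T = LTree.nil
  · subst hnil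
    haveI hE : IsEmpty (Fin (LTree.nil.maxL)) := ⟨fun i => i.elim0⟩
    refine ⟨⟨fun i => i.elim0, fun i => i.elim0, fun j => j.elim0⟩, ?_⟩
    simp [matSize, LTree.size]
  -- identify k' with maxL
  have hmaxmem : T.maxL ∈ T.inorder := LTree.maxL_mem_inorder T hnil
  have h2 : T.maxL ≤ k' := ((hk' _).mp hmaxmem).2
  have hk1 : 1 ≤ k' := le_trans ((hk' _).mp hmaxmem).1 h2
  have h4 : k' ≤ T.maxL :=
    LTree.le_maxL_of_mem_inorder T k' ((hk' k').mpr ⟨hk1, le_refl _⟩)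
  have hkk : k' = T.maxL := le_antisymm h4 h2
  subst hkk
  -- bounds for positions
  have hB : ∀ p ∈ T.positions,
      1 ≤ T.labelAt p ∧ T.labelAt p ≤ T.blabel p ∧ T.blabel p ≤ T.maxL := by
    intro p hp
    have hpos : T.IsNodePos p := (LTree.mem_positions_iff T p).mp hp
    have hlab : T.labelAt p ∈ T.inorder := LTree.labelAt_mem_inorder T p hpos
    have h1 : 1 ≤ T.labelAt p := ((hk' _).mp hlab).1
    obtain ⟨hbl, hbu⟩ := LTree.blabel_bounds T p hdec hpos
    exact ⟨h1, hbl, hbu⟩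
  -- a convenient way to show an entry is nonzero
  have hne : ∀ (i j : Fin T.maxL) (p : List Bool), p ∈ T.positions →
      T.blabel p = i.1 + 1 → T.labelAt p = j.1 + 1 → T.treeMatrix i j ≠ 0 := by
    intro i j p hp hb hl
    simp only [LTree.treeMatrix, ne_eq, List.length_eq_zero_iff]
    intro hfil
    have : p ∈ T.positions.filter fun p =>
        decide (T.blabel p = i.1 + 1 ∧ T.labelAt p = j.1 + 1) :=
      List.mem_filter.mpr ⟨hp, by simp [hb, hl]⟩
    rw [hfil] at this
    exact List.not_mem_nil this
  refine ⟨⟨?_, ?_, ?_⟩, ?_⟩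
  · -- lower triangular
    intro i j hij
    have hij' : i.1 < j.1 := hij
    simp only [LTree.treeMatrix, List.length_eq_zero_iff]
    rw [List.filter_eq_nil_iff]
    intro p hp
    simp only [decide_eq_true_eq, not_and]
    intro hb hl
    have := hB p hp
    omega
  · -- rows
    intro i
    have hi2 : i.1 < T.maxL := i.2
    have hmem : (i.1 + 1) ∈ T.inorder := (hk' _).mpr ⟨by omega, by omega⟩
    rw [LTree.inorder_eq_map] at hmem
    obtain ⟨t, ht, hrt⟩ := List.mem_map.mp hmem
    obtain ⟨m0, hm0, hgm⟩ := List.mem_iff_getElem.mp ht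
    have hexP : ∃ m, m < T.nodes.length ∧
        (T.nodes.getD m LTree.nil).rootLabel = i.1 + 1 :=
      ⟨m0, hm0, by rw [List.getD_eq_getElem _ _ hm0, hgm]; exact hrt⟩
    set m := Nat.find hexP with hmdef
    have hfind := Nat.find_spec hexP
    have hmlen : m < T.nodes.length := hfind.1
    have hmu : m ∈ T.unseenIdx := by
      refine ⟨by rw [← LTree.nodes_length]; exact hmlen, ?_⟩
      intro j hj hEq
      exact Nat.find_min hexP hj ⟨lt_trans hj hmlen, by rw [hEq]; exact hfind.2⟩
    have hmt : m ∈ T.treetopsIdx := by rw [htt]; exact hmu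
    obtain ⟨-, hcase⟩ := hmt
    have humem : T.nodes.getD m LTree.nil ∈ T.nodes := by
      rw [List.getD_eq_getElem _ _ hmlen]
      exact List.getElem_mem _
    obtain ⟨p, hpos, hsub⟩ := LTree.mem_nodes_pos T _ humem
    have hp : p ∈ T.positions := (LTree.mem_positions_iff T p).mpr hpos
    have hlabp : T.labelAt p = i.1 + 1 := by
      simp only [LTree.labelAt, hsub]; exact hfind.2
    by_cases hdg : LTree.OnDiag p
    · have hbp : T.blabel p = i.1 + 1 := by
        rw [LTree.blabel_diag T p hpos hdg, hlabp]
      exact ⟨i, hne i i p hp hbp hlabp⟩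
    rcases hcase with hm0' | hleft
    · -- first in-order node: it lies on the diagonal
      obtain ⟨p', hdg', hpos', hsub'⟩ := LTree.head_nodes_diag T hnil
      have hp' : p' ∈ T.positions := (LTree.mem_positions_iff T p').mpr hpos'
      have hroot0 : (T.nodes.getD 0 LTree.nil).rootLabel = i.1 + 1 := hm0' ▸ hfind.2
      have hlabp' : T.labelAt p' = i.1 + 1 := by
        simp only [LTree.labelAt, hsub']; exact hroot0
      have hbp' : T.blabel p' = i.1 + 1 := by
        rw [LTree.blabel_diag T p' hpos' hdg', hlabp']
      exact ⟨i, hne i i p' hp' hbp' hlabp'⟩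
    · -- the node has a left child
      have hbq : T.blabel (p ++ [false]) = i.1 + 1 := by
        rw [LTree.blabel_append T p hpos hdg, hlabp]
      obtain ⟨L, r, R, hu'⟩ : ∃ L r R,
          T.nodes.getD m LTree.nil = LTree.node L r R := by
        cases hu : T.nodes.getD m LTree.nil with
        | nil => rw [hu] at hleft; simp [LTree.leftT] at hleft
        | node a b c => exact ⟨a, b, c, rfl⟩
      have hLnil : L ≠ LTree.nil := by
        rw [hu'] at hleft; simpa [LTree.leftT] using hleft
      obtain ⟨L1, r1, R1, hL'⟩ : ∃ L1 r1 R1, L = LTree.node L1 r1 R1 := by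
        cases L with
        | nil => exact absurd rfl hLnil
        | node a b c => exact ⟨a, b, c, rfl⟩
      have hposq : T.IsNodePos (p ++ [false]) := by
        refine ⟨L1, r1, R1, ?_⟩
        rw [LTree.subtreeAt_append, hsub, hu']
        simp [LTree.subtreeAt, hL']
      have hq : (p ++ [false]) ∈ T.positions :=
        (LTree.mem_positions_iff _ _).mpr hposq
      obtain ⟨h1q, h2q, h3q⟩ := hB _ hq
      refine ⟨⟨T.labelAt (p ++ [false]) - 1, by omega⟩,
        hne i _ _ hq hbq ?_⟩
      show T.labelAt (p ++ [false]) = (T.labelAt (p ++ [false]) - 1) + 1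
      omega
  · -- columns
    intro j
    have hj2 : j.1 < T.maxL := j.2
    have hmem : (j.1 + 1) ∈ T.inorder := (hk' _).mpr ⟨by omega, by omega⟩
    obtain ⟨p, hpos, hlab⟩ := LTree.exists_pos_of_mem_inorder T _ hmem
    have hp : p ∈ T.positions := (LTree.mem_positions_iff T p).mpr hpos
    obtain ⟨h1, hbl, hbu⟩ := hB p hp
    have hb1 : 1 ≤ T.blabel p := by omega
    refine ⟨⟨T.blabel p - 1, by omega⟩, hne _ _ p hp ?_ hlab⟩
    show T.blabel p = (T.blabel p - 1) + 1
    omega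
  · -- size
    have huniq : ∀ p ∈ T.positions, ∃! x : Fin T.maxL × Fin T.maxL,
        x ∈ (Finset.univ : Finset (Fin T.maxL × Fin T.maxL)) ∧
        (T.blabel p = x.1.1 + 1 ∧ T.labelAt p = x.2.1 + 1) := by
      intro p hp
      obtain ⟨h1, hbl, hbu⟩ := hB p hp
      refine ⟨(⟨T.blabel p - 1, by omega⟩, ⟨T.labelAt p - 1, by omega⟩),
        ⟨Finset.mem_univ _,
         show T.blabel p = (T.blabel p - 1) + 1 by omega,
         show T.labelAt p = (T.labelAt p - 1) + 1 by omega⟩, ?_⟩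
      rintro y ⟨-, hy1, hy2⟩
      have e1 : y.1 = (⟨T.blabel p - 1, by omega⟩ : Fin T.maxL) :=
        Fin.ext (show y.1.1 = T.blabel p - 1 by omega)
      have e2 : y.2 = (⟨T.labelAt p - 1, by omega⟩ : Fin T.maxL) :=
        Fin.ext (show y.2.1 = T.labelAt p - 1 by omega)
      exact Prod.ext e1 e2
    have hsum := sum_filter_length
      (Finset.univ : Finset (Fin T.maxL × Fin T.maxL))
      (fun x p => T.blabel p = x.1.1 + 1 ∧ T.labelAt p = x.2.1 + 1)
      T.positions huniq
    calc matSize T.treeMatrix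
        = ∑ x : Fin T.maxL × Fin T.maxL,
            ((T.positions.filter fun p =>
              T.blabel p = x.1.1 + 1 ∧ T.labelAt p = x.2.1 + 1)).length := by
          rw [Fintype.sum_prod_type]; rfl
      _ = T.positions.length := hsum
      _ = T.size := LTree.length_positions T
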